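/- arXiv:2306.06324 — 2 statements merged into one kernel-verified Lean document; each statement's English description precedes it below -/
import Mathlib

section
/- Let ξ ~ N_p(0, Σ_ξ) be a centered Gaussian vector in ℝ^p with positive definite covariance Σ_ξ, and let v ∈ ℝ^p with ‖v‖₂ ≤ Δ. If ‖Σ_ξ^{-1}‖₂ ≤ (4·log(2/δ) + 2ε − 4·√((log(2/δ))² + ε·log(2/δ)))/Δ², then for every measurable set S ⊆ ℝ^p, P(ξ ∈ S) ≤ e^ε · P(ξ + v ∈ S) + δ. Consequently, the mechanism releasing f(D) + ξ for an algorithm f with l₂-sensitivity at most Δ is (ε,δ)-differentially private. -/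
/-!
The density of `ξ` at `x` is `exp (η / 2 - ⟪Σ⁻¹ v, x⟫)` times the density of `ξ + v`,
where `η = vᵀ Σ⁻¹ v`. So `P(ξ ∈ S) ≤ e^ε P(ξ + v ∈ S)` holds on the event where this
privacy loss is at most `ε`, and the complementary event `{⟪Σ⁻¹ v, ξ⟫ < η / 2 - ε}` is a tail
of the real Gaussian `⟪Σ⁻¹ v, ξ⟫ ~ N(0, η)`, of probability at most
`exp (-(ε - η / 2) ^ 2 / (2 η))` by a Chernoff bound. The bound on `‖Σ⁻¹‖` keeps `η` below the
smaller root of `(ε - η / 2) ^ 2 = 2 η log (2 / δ)`, which makes this tail at most `δ / 2`.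
The mechanism is the case `v = f D' - f D`.
-/

open MeasureTheory Matrix

/-- Density of the centered multivariate Gaussian with covariance `S` at `x`. -/
noncomputable def gaussDensity {p : ℕ} (S : Matrix (Fin p) (Fin p) ℝ)
    (x : Fin p → ℝ) : ℝ :=
  (Real.sqrt ((2 * Real.pi) ^ p * S.det))⁻¹ *
    Real.exp (-(1 / 2) * (S⁻¹.mulVec x ⬝ᵥ x))

/-- Law of a centered multivariate Gaussian vector with covariance `S`. -/
noncomputable def gaussMeasure {p : ℕ} (S : Matrix (Fin p) (Fin p) ℝ) :
    Measure (Fin p → ℝ) :=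
  volume.withDensity (fun x => ENNReal.ofReal (gaussDensity S x))

open Real
open scoped ENNReal

lemma Matrix.PosDef.isSymm {ι : Type*} {A : Matrix ι ι ℝ} (hA : A.PosDef) : A.IsSymm :=
  isHermitian_iff_isSymm.1 hA.isHermitian

section LinearAlgebra

variable {ι : Type*} [Fintype ι]

lemma Matrix.IsSymm.mulVec_dotProduct_comm {A : Matrix ι ι ℝ} (hA : A.IsSymm)
    (x y : ι → ℝ) :
    A *ᵥ x ⬝ᵥ y = A *ᵥ y ⬝ᵥ x := by
  rw [dotProduct_comm, dotProduct_mulVec, ← mulVec_transpose, hA.eq]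

lemma Matrix.IsSymm.mulVec_sub_dotProduct_sub {A : Matrix ι ι ℝ} (hA : A.IsSymm)
    (x v : ι → ℝ) :
    A *ᵥ (x - v) ⬝ᵥ (x - v) = A *ᵥ x ⬝ᵥ x - 2 * (A *ᵥ v ⬝ᵥ x) + A *ᵥ v ⬝ᵥ v := by
  simp only [mulVec_sub, sub_dotProduct, dotProduct_sub, hA.mulVec_dotProduct_comm x v]
  ring

end LinearAlgebra

lemma lintegral_comp_mulVec {ι : Type*} [Fintype ι] [DecidableEq ι] {M : Matrix ι ι ℝ}
    (hM : M.det ≠ 0) {f : (ι → ℝ) → ℝ≥0∞} (hf : Measurable f) :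
    ∫⁻ x, f (M *ᵥ x) = ENNReal.ofReal |M.det⁻¹| * ∫⁻ x, f x := by
  rw [← smul_eq_mul, ← lintegral_smul_measure,
    ← Real.map_matrix_volume_pi_eq_smul_volume_pi hM,
    lintegral_map hf (LinearMap.continuous_on_pi _).measurable]
  rfl

lemma lintegral_exp_neg_half_dotProduct_self (ι : Type*) [Fintype ι] :
    ∫⁻ x : ι → ℝ, ENNReal.ofReal (exp (-(1 / 2) * (x ⬝ᵥ x))) =
      ENNReal.ofReal (√(2 * π) ^ Fintype.card ι) := by
  have hprod (x : ι → ℝ) : exp (-(1 / 2) * (x ⬝ᵥ x)) = ∏ i, exp (-(1 / 2) * x i ^ 2) := by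
    simp only [dotProduct, Finset.mul_sum, Real.exp_sum, sq]
  have hint : Integrable fun x : ι → ℝ => ∏ i, exp (-(1 / 2) * x i ^ 2) :=
    Integrable.fintype_prod fun _ => integrable_exp_neg_mul_sq (by norm_num)
  simp_rw [hprod]
  rw [← ofReal_integral_eq_lintegral_ofReal hint (ae_of_all _ fun x => by positivity),
    integral_fintype_prod_volume_eq_pow (fun t => exp (-(1 / 2) * t ^ 2)), integral_gaussian]
  norm_num [div_eq_mul_inv, mul_comm]

open scoped MatrixOrder in
lemma lintegral_gaussDensity {p : ℕ} {S : Matrix (Fin p) (Fin p) ℝ} (hS : S.PosDef) :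
    ∫⁻ x, ENNReal.ofReal (gaussDensity S x) = 1 := by
  set B := CFC.sqrt S⁻¹
  have hB : B * B = S⁻¹ :=
    CFC.sqrt_mul_sqrt_self _ (nonneg_iff_posSemidef.2 hS.inv.posSemidef)
  have hdS : 0 < S.det := hS.det_pos
  have hBsymm : B.IsSymm :=
    isHermitian_iff_isSymm.1 (nonneg_iff_posSemidef.1 (CFC.sqrt_nonneg _)).isHermitian
  have hdetB : B.det = (√S.det)⁻¹ := by
    rw [hS.inv.posSemidef.det_sqrt, RCLike.sqrt_of_nonneg hS.inv.posSemidef.det_nonneg,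
      det_nonsing_inv, Ring.inverse_eq_inv', ← Real.sqrt_inv]
    rfl
  have hquad (x : Fin p → ℝ) : S⁻¹ *ᵥ x ⬝ᵥ x = B *ᵥ x ⬝ᵥ B *ᵥ x := by
    rw [← hB, ← mulVec_mulVec, hBsymm.mulVec_dotProduct_comm]
  have hsqrt : √((2 * π) ^ p) = √(2 * π) ^ p := by
    rw [Real.sqrt_eq_iff_mul_self_eq (by positivity) (by positivity), ← mul_pow,
      Real.mul_self_sqrt (by positivity)]
  calc ∫⁻ x, ENNReal.ofReal (gaussDensity S x)
      = ENNReal.ofReal (√((2 * π) ^ p * S.det))⁻¹ *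
          ∫⁻ x, ENNReal.ofReal (exp (-(1 / 2) * (B *ᵥ x ⬝ᵥ B *ᵥ x))) := by
        rw [← lintegral_const_mul' _ _ ENNReal.ofReal_ne_top]
        refine lintegral_congr fun x => ?_
        rw [gaussDensity, hquad, ENNReal.ofReal_mul (by positivity)]
    _ = ENNReal.ofReal (√((2 * π) ^ p * S.det))⁻¹ *
          (ENNReal.ofReal |B.det⁻¹| * ENNReal.ofReal (√(2 * π) ^ p)) := by
        rw [lintegral_comp_mulVec (by rw [hdetB]; positivity)
          (f := fun y => ENNReal.ofReal (exp (-(1 / 2) * (y ⬝ᵥ y)))) (by fun_prop),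
          lintegral_exp_neg_half_dotProduct_self, Fintype.card_fin]
    _ = 1 := by
        rw [← ENNReal.ofReal_mul (abs_nonneg _), ← ENNReal.ofReal_mul (by positivity),
          hdetB, inv_inv, abs_of_pos (by positivity), Real.sqrt_mul (by positivity), hsqrt,
          mul_comm √S.det, inv_mul_cancel₀ (by positivity), ENNReal.ofReal_one]

lemma gaussDensity_eq_exp_mul_gaussDensity_sub {p : ℕ} {S : Matrix (Fin p) (Fin p) ℝ}
    (hS : S.IsSymm) (v x : Fin p → ℝ) :
    gaussDensity S x =
      exp ((S⁻¹ *ᵥ v ⬝ᵥ v) / 2 - S⁻¹ *ᵥ v ⬝ᵥ x) * gaussDensity S (x - v) := by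
  rw [gaussDensity, gaussDensity, hS.inv.mulVec_sub_dotProduct_sub, mul_left_comm,
    ← exp_add]
  ring_nf

lemma measurable_gaussDensity {p : ℕ} (S : Matrix (Fin p) (Fin p) ℝ) :
    Measurable (gaussDensity S) := by
  unfold gaussDensity
  fun_prop

lemma lintegral_exp_dotProduct_gaussMeasure {p : ℕ} {S : Matrix (Fin p) (Fin p) ℝ}
    (hS : S.PosDef) (u : Fin p → ℝ) :
    ∫⁻ x, ENNReal.ofReal (exp (u ⬝ᵥ x)) ∂gaussMeasure S =
      ENNReal.ofReal (exp ((S *ᵥ u ⬝ᵥ u) / 2)) := by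
  have hinv : S⁻¹ *ᵥ (S *ᵥ u) = u := by
    rw [mulVec_mulVec, nonsing_inv_mul _ (hS.isUnit.map detMonoidHom), one_mulVec]
  have htilt (x : Fin p → ℝ) : gaussDensity S x * exp (u ⬝ᵥ x) =
      exp ((S *ᵥ u ⬝ᵥ u) / 2) * gaussDensity S (x - S *ᵥ u) := by
    rw [gaussDensity_eq_exp_mul_gaussDensity_sub hS.isSymm (S *ᵥ u) x, hinv,
      dotProduct_comm u (S *ᵥ u), mul_right_comm, ← exp_add, sub_add_cancel]
  calc ∫⁻ x, ENNReal.ofReal (exp (u ⬝ᵥ x)) ∂gaussMeasure S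
      = ∫⁻ x, ENNReal.ofReal (gaussDensity S x) * ENNReal.ofReal (exp (u ⬝ᵥ x)) :=
        lintegral_withDensity_eq_lintegral_mul _ (measurable_gaussDensity S).ennreal_ofReal
          (by fun_prop)
    _ = ∫⁻ x, ENNReal.ofReal (exp ((S *ᵥ u ⬝ᵥ u) / 2)) *
          ENNReal.ofReal (gaussDensity S (x - S *ᵥ u)) := by
        refine lintegral_congr fun x => ?_
        rw [← ENNReal.ofReal_mul (exp_pos _).le,
          ← ENNReal.ofReal_mul (by unfold gaussDensity; positivity), htilt]
    _ = ENNReal.ofReal (exp ((S *ᵥ u ⬝ᵥ u) / 2)) := by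
        rw [lintegral_const_mul' _ _ ENNReal.ofReal_ne_top,
          lintegral_sub_right_eq_self (fun x => ENNReal.ofReal (gaussDensity S x)),
          lintegral_gaussDensity hS, mul_one]

lemma gaussMeasure_dotProduct_ge_le {p : ℕ} {S : Matrix (Fin p) (Fin p) ℝ} (hS : S.PosDef)
    (u : Fin p → ℝ) {t : ℝ} (ht : 0 ≤ t) :
    gaussMeasure S {x | t ≤ u ⬝ᵥ x} ≤
      ENNReal.ofReal (exp (-t ^ 2 / (2 * (S *ᵥ u ⬝ᵥ u)))) := by
  set q := S *ᵥ u ⬝ᵥ u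
  -- Chernoff bound, with the optimal exponent `lam`
  set lam := t / q
  have hlam : 0 ≤ lam := div_nonneg ht <| by
    simpa [q, dotProduct_comm] using hS.posSemidef.dotProduct_mulVec_nonneg u
  have hsub : {x | t ≤ u ⬝ᵥ x} ⊆
      {x | 1 ≤ ENNReal.ofReal (exp (-(lam * t))) * ENNReal.ofReal (exp (lam • u ⬝ᵥ x))} := by
    intro x hx
    rw [Set.mem_ofPred_eq, ← ENNReal.ofReal_mul (exp_pos _).le, ← exp_add, smul_dotProduct,
      smul_eq_mul, ENNReal.one_le_ofReal, one_le_exp_iff]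
    nlinarith [hx.out]
  have hexponent : -(lam * t) + (S *ᵥ (lam • u) ⬝ᵥ lam • u) / 2 = -t ^ 2 / (2 * q) := by
    rw [mulVec_smul, smul_dotProduct, dotProduct_smul, smul_eq_mul, smul_eq_mul]
    change -(lam * t) + lam * (lam * q) / 2 = _
    rcases eq_or_ne q 0 with hq | hq
    · simp [lam, hq]
    · simp only [lam]
      field_simp
      ring
  calc gaussMeasure S {x | t ≤ u ⬝ᵥ x}
      ≤ gaussMeasure S
          {x | 1 ≤ ENNReal.ofReal (exp (-(lam * t))) * ENNReal.ofReal (exp (lam • u ⬝ᵥ x))} :=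
        measure_mono hsub
    _ ≤ ∫⁻ x, ENNReal.ofReal (exp (-(lam * t))) * ENNReal.ofReal (exp (lam • u ⬝ᵥ x))
          ∂gaussMeasure S := by
        simpa using mul_meas_ge_le_lintegral₀ (by fun_prop) 1
    _ = ENNReal.ofReal (exp (-t ^ 2 / (2 * q))) := by
        rw [lintegral_const_mul' _ _ ENNReal.ofReal_ne_top,
          lintegral_exp_dotProduct_gaussMeasure hS, ← ENNReal.ofReal_mul (exp_pos _).le,
          ← exp_add, hexponent]

lemma withDensity_apply_le_mul_setLIntegral_add {α : Type*} [MeasurableSpace α]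
    {μ : Measure α} {f g : α → ℝ≥0∞} {c : ℝ≥0∞} (hc : c ≠ ∞) {G A : Set α} (hG : MeasurableSet G)
    (hA : MeasurableSet A) (hfg : ∀ x ∈ G, f x ≤ c * g x) :
    μ.withDensity f A ≤ c * ∫⁻ x in A, g x ∂μ + μ.withDensity f Gᶜ := by
  calc μ.withDensity f A ≤ μ.withDensity f (A ∩ G) + μ.withDensity f Gᶜ :=
        (measure_le_inter_add_sdiff _ A G).trans (by gcongr; exact Set.sdiff_subset_compl A G)
    _ ≤ c * ∫⁻ x in A, g x ∂μ + μ.withDensity f Gᶜ := by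
        gcongr
        calc μ.withDensity f (A ∩ G) = ∫⁻ x in A ∩ G, f x ∂μ :=
              withDensity_apply _ (hA.inter hG)
          _ ≤ ∫⁻ x in A ∩ G, c * g x ∂μ :=
              setLIntegral_mono' (hA.inter hG) fun x hx => hfg x hx.2
          _ = c * ∫⁻ x in A ∩ G, g x ∂μ := lintegral_const_mul' _ _ hc
          _ ≤ c * ∫⁻ x in A, g x ∂μ := by gcongr; exact Set.inter_subset_left

lemma gaussMeasure_preimage_add_right {p : ℕ} (S : Matrix (Fin p) (Fin p) ℝ) (v : Fin p → ℝ)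
    {A : Set (Fin p → ℝ)} (hA : MeasurableSet A) :
    gaussMeasure S ((· + v) ⁻¹' A) =
      ∫⁻ x in A, ENNReal.ofReal (gaussDensity S (x - v)) := by
  have hf : Measurable fun x => ENNReal.ofReal (gaussDensity S (x - v)) :=
    ((measurable_gaussDensity S).comp (measurable_sub_const v)).ennreal_ofReal
  rw [gaussMeasure, withDensity_apply _ (hA.preimage (measurable_add_const v)),
    ← (measurePreserving_add_right volume v).setLIntegral_comp_preimage hA hf]
  simp only [add_sub_cancel_right]

/-- The smaller root of `η ↦ (ε - η / 2) ^ 2 - 2 * L * η`. -/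
noncomputable def gaussPrivacyThreshold (ε L : ℝ) : ℝ :=
  4 * L + 2 * ε - 4 * √(L ^ 2 + ε * L)

lemma gaussPrivacyThreshold_nonneg {ε L : ℝ} (hε : 0 ≤ ε) (hL : 0 ≤ L) :
    0 ≤ gaussPrivacyThreshold ε L := by
  have hs := sq_sqrt (by positivity : 0 ≤ L ^ 2 + ε * L)
  unfold gaussPrivacyThreshold
  nlinarith [sqrt_nonneg (L ^ 2 + ε * L)]

lemma le_sq_div_of_le_gaussPrivacyThreshold {ε L η : ℝ} (hε : 0 < ε) (hL : 0 < L)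
    (hη : 0 < η) (h : η ≤ gaussPrivacyThreshold ε L) :
    0 ≤ ε - η / 2 ∧ L ≤ (ε - η / 2) ^ 2 / (2 * η) := by
  set s := √(L ^ 2 + ε * L)
  have hs : s ^ 2 = L ^ 2 + ε * L := sq_sqrt (by positivity)
  have hLs : L < s := by nlinarith [sqrt_nonneg (L ^ 2 + ε * L), mul_pos hε hL]
  unfold gaussPrivacyThreshold at h
  refine ⟨by linarith, ?_⟩
  rw [le_div_iff₀ (by positivity)]
  nlinarith [mul_nonneg (sub_nonneg.2 h) (by linarith : 0 ≤ 4 * L + 2 * ε + 4 * s - η)]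

theorem gaussMeasure_le_exp_mul_preimage_add_add {p : ℕ} {S : Matrix (Fin p) (Fin p) ℝ}
    (hS : S.PosDef) {ε L : ℝ} (hε : 0 < ε) (hL : 0 < L) {v : Fin p → ℝ}
    (hv : S⁻¹ *ᵥ v ⬝ᵥ v ≤ gaussPrivacyThreshold ε L) {A : Set (Fin p → ℝ)}
    (hA : MeasurableSet A) :
    gaussMeasure S A ≤
      ENNReal.ofReal (exp ε) * gaussMeasure S ((· + v) ⁻¹' A) + ENNReal.ofReal (exp (-L)) := by
  rcases eq_or_ne v 0 with rfl | hv0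
  · simp only [add_zero, Set.preimage_id']
    exact le_add_right <|
      le_mul_of_one_le_left zero_le (ENNReal.one_le_ofReal.2 (one_le_exp hε.le))
  set w := S⁻¹ *ᵥ v
  set η := w ⬝ᵥ v
  have hη : 0 < η := by
    change 0 < S⁻¹ *ᵥ v ⬝ᵥ v
    rw [dotProduct_comm]
    simpa using hS.inv.dotProduct_mulVec_pos hv0
  obtain ⟨ht, hLt⟩ := le_sq_div_of_le_gaussPrivacyThreshold hε hL hη hv
  have hSw : S *ᵥ -w ⬝ᵥ -w = η := by
    rw [mulVec_neg, mulVec_mulVec, mul_nonsing_inv _ (hS.isUnit.map detMonoidHom), one_mulVec,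
      neg_dotProduct_neg, dotProduct_comm]
  -- `G` is where the privacy loss `log (gaussDensity S x / gaussDensity S (x - v))` is `≤ ε`
  set G := {x | η / 2 - ε ≤ w ⬝ᵥ x}
  have hG : MeasurableSet G := measurableSet_le measurable_const (by fun_prop)
  have hloss : ∀ x ∈ G, ENNReal.ofReal (gaussDensity S x) ≤
      ENNReal.ofReal (exp ε) * ENNReal.ofReal (gaussDensity S (x - v)) := by
    intro x hx
    rw [gaussDensity_eq_exp_mul_gaussDensity_sub hS.isSymm v x,
      ENNReal.ofReal_mul (exp_pos _).le]
    gcongr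
    linarith [hx.out]
  have htail : gaussMeasure S Gᶜ ≤ ENNReal.ofReal (exp (-L)) := by
    calc gaussMeasure S Gᶜ ≤ gaussMeasure S {x | ε - η / 2 ≤ -w ⬝ᵥ x} := by
          refine measure_mono fun x hx => ?_
          simp only [G, Set.mem_compl_iff, Set.mem_ofPred_eq, not_le, neg_dotProduct] at hx ⊢
          linarith
      _ ≤ ENNReal.ofReal (exp (-(ε - η / 2) ^ 2 / (2 * η))) := by
          simpa only [hSw] using gaussMeasure_dotProduct_ge_le hS (-w) ht
      _ ≤ ENNReal.ofReal (exp (-L)) := by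
          gcongr
          rw [neg_div, neg_le_neg_iff]
          exact hLt
  calc gaussMeasure S A
      ≤ ENNReal.ofReal (exp ε) * (∫⁻ x in A, ENNReal.ofReal (gaussDensity S (x - v))) +
          gaussMeasure S Gᶜ := by
        unfold gaussMeasure
        exact withDensity_apply_le_mul_setLIntegral_add ENNReal.ofReal_ne_top hG hA hloss
    _ ≤ _ := by rw [gaussMeasure_preimage_add_right S v hA]; gcongr

lemma map_const_add_le_of_forall_shift {ι : Type*} [Fintype ι] {μ : Measure (ι → ℝ)}
    {c d : ℝ≥0∞} {Δ : ℝ}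
    (h : ∀ v : ι → ℝ, √(v ⬝ᵥ v) ≤ Δ → ∀ A : Set (ι → ℝ), MeasurableSet A →
      μ A ≤ c * μ ((· + v) ⁻¹' A) + d)
    {a b : ι → ℝ} (hab : √((a - b) ⬝ᵥ (a - b)) ≤ Δ) {A : Set (ι → ℝ)} (hA : MeasurableSet A) :
    μ.map (a + ·) A ≤ c * μ.map (b + ·) A + d := by
  have hba : (b - a) ⬝ᵥ (b - a) = (a - b) ⬝ᵥ (a - b) := by
    rw [← neg_sub a b, neg_dotProduct_neg]
  have hpre : (· + (b - a)) ⁻¹' ((a + ·) ⁻¹' A) = (b + ·) ⁻¹' A := by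
    ext x
    simp only [Set.mem_preimage, show a + (x + (b - a)) = b + x by abel]
  rw [Measure.map_apply (measurable_const_add a) hA,
    Measure.map_apply (measurable_const_add b) hA, ← hpre]
  exact h (b - a) (hba ▸ hab) _ (hA.preimage (measurable_const_add a))

theorem vgm_mechanism_dp_general {p : ℕ} (ε δ Δ : ℝ)
    (hε : 0 < ε) (hδ0 : 0 < δ) (hδ1 : δ < 1)
    (Sξ : Matrix (Fin p) (Fin p) ℝ) (hPD : Sξ.PosDef)
    (hop : ∀ x : Fin p → ℝ, Sξ⁻¹.mulVec x ⬝ᵥ x ≤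
      ((4 * Real.log (2 / δ) + 2 * ε -
          4 * Real.sqrt ((Real.log (2 / δ)) ^ 2 + ε * Real.log (2 / δ))) / Δ ^ 2) *
        (x ⬝ᵥ x)) :
    (∀ v : Fin p → ℝ, Real.sqrt (v ⬝ᵥ v) ≤ Δ →
      ∀ S : Set (Fin p → ℝ), MeasurableSet S →
        gaussMeasure Sξ S ≤
          ENNReal.ofReal (Real.exp ε) * gaussMeasure Sξ ((fun x => x + v) ⁻¹' S) +
            ENNReal.ofReal δ) ∧
    (∀ (𝒟 : Type) (adj : 𝒟 → 𝒟 → Prop) (f : 𝒟 → Fin p → ℝ),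
      (∀ D D', adj D D' → Real.sqrt ((f D - f D') ⬝ᵥ (f D - f D')) ≤ Δ) →
      ∀ D D', adj D D' → ∀ S : Set (Fin p → ℝ), MeasurableSet S →
        (gaussMeasure Sξ).map (fun x => f D + x) S ≤
          ENNReal.ofReal (Real.exp ε) * (gaussMeasure Sξ).map (fun x => f D' + x) S +
            ENNReal.ofReal δ) := by
  set L := log (2 / δ)
  have hL : 0 < L := log_pos (by rw [lt_div_iff₀ hδ0]; linarith)
  have hexpL : exp (-L) ≤ δ := by
    rw [exp_neg, exp_log (by positivity), inv_div]
    linarith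
  have hshift (v : Fin p → ℝ) (hv : √(v ⬝ᵥ v) ≤ Δ) (A : Set (Fin p → ℝ))
      (hA : MeasurableSet A) :
      gaussMeasure Sξ A ≤
        ENNReal.ofReal (exp ε) * gaussMeasure Sξ ((· + v) ⁻¹' A) + ENNReal.ofReal δ := by
    have hc := gaussPrivacyThreshold_nonneg hε.le hL.le
    have hquad : Sξ⁻¹ *ᵥ v ⬝ᵥ v ≤ gaussPrivacyThreshold ε L := by
      refine (hop v).trans ?_
      rw [div_mul_eq_mul_div]
      exact div_le_of_le_mul₀ (sq_nonneg Δ) hc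
        (mul_le_mul_of_nonneg_left (sqrt_le_iff.1 hv).2 hc)
    calc gaussMeasure Sξ A ≤ _ := gaussMeasure_le_exp_mul_preimage_add_add hPD hε hL hquad hA
      _ ≤ _ := by gcongr
  exact ⟨hshift, fun _ _ f hf D D' hadj _ hA =>
    map_const_add_le_of_forall_shift hshift (hf D D' hadj) hA⟩

/-- The vectorized Gaussian mechanism is `(ε,δ)`-differentially private: if the noise
covariance `Σ_ξ` is symmetric positive definite with
`‖Σ_ξ⁻¹‖₂ ≤ (4 log(2/δ) + 2ε − 4√((log(2/δ))² + ε log(2/δ)))/Δ²` (operator norm bound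
expressed via the quadratic form), then for every shift `v` with `‖v‖₂ ≤ Δ` and every
measurable `S`, `P(ξ ∈ S) ≤ e^ε P(ξ + v ∈ S) + δ`; consequently adding noise `ξ` to any
algorithm `f` with l₂-sensitivity at most `Δ` yields an `(ε,δ)`-DP mechanism. -/
theorem vgm_mechanism_dp {p : ℕ} (ε δ Δ : ℝ)
    (hε : 0 < ε) (hδ0 : 0 < δ) (hδ1 : δ < 1) (hΔ : 0 < Δ)
    (Sξ : Matrix (Fin p) (Fin p) ℝ) (hsym : Sξ.IsSymm) (hPD : Sξ.PosDef)
    (hop : ∀ x : Fin p → ℝ, Sξ⁻¹.mulVec x ⬝ᵥ x ≤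
      ((4 * Real.log (2 / δ) + 2 * ε -
          4 * Real.sqrt ((Real.log (2 / δ)) ^ 2 + ε * Real.log (2 / δ))) / Δ ^ 2) *
        (x ⬝ᵥ x)) :
    (∀ v : Fin p → ℝ, Real.sqrt (v ⬝ᵥ v) ≤ Δ →
      ∀ S : Set (Fin p → ℝ), MeasurableSet S →
        gaussMeasure Sξ S ≤
          ENNReal.ofReal (Real.exp ε) * gaussMeasure Sξ ((fun x => x + v) ⁻¹' S) +
            ENNReal.ofReal δ) ∧
    (∀ (𝒟 : Type) (adj : 𝒟 → 𝒟 → Prop) (f : 𝒟 → Fin p → ℝ),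
      (∀ D D', adj D D' → Real.sqrt ((f D - f D') ⬝ᵥ (f D - f D')) ≤ Δ) →
      ∀ D D', adj D D' → ∀ S : Set (Fin p → ℝ), MeasurableSet S →
        (gaussMeasure Sξ).map (fun x => f D + x) S ≤
          ENNReal.ofReal (Real.exp ε) * (gaussMeasure Sξ).map (fun x => f D' + x) S +
            ENNReal.ofReal δ) :=
  vgm_mechanism_dp_general ε δ Δ hε hδ0 hδ1 Sξ hPD hop
end

section
/- Let X be a p-dimensional random vector with E(X) = 0 and invertible covariance Σ, let Y be a random variable, and let β ∈ ℝ^{p×d} with E(X | β^T X) = P_β(Σ)^T X almost surely, where P_β(Σ) = β(β^T Σ β)^{-1} β^T Σ is the Σ-orthogonal projection onto span(β). If Y is conditionally independent of X given β^T X, then for every event A in the σ-algebra of Y, the vector Σ^{-1} E[X · 1_A(Y)] lies in the column space of β. -/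
/-!
Write `G = σ(βᵀX)` and `B = {Y ∈ A}`. Conditional independence of `Y` and `X` given `G` makes
`P(B | G)` a version of `P(B | σ(X))`, so `E[f; B] = E[f · P(B | G)]` for every integrable
`σ(X)`-measurable `f`. Applied to `f = X_j` and `f = (PᵀX)_j`, together with
`E[X_j | G] = (PᵀX)_j`, this shows that `m = E[X; B]` is a fixed point of `Pᵀ`. As `Σ` is
symmetric, `Σ⁻¹ Pᵀ = β (βᵀΣβ)⁻ᵀ βᵀ`, so `Σ⁻¹ m = Σ⁻¹ Pᵀ m` lies in the column space
of `β`.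
-/

open MeasureTheory ProbabilityTheory Matrix

theorem Matrix.inv_mulVec_transpose_mulVec_mem_span_col {R n k : Type*} [CommRing R]
    [Fintype n] [DecidableEq n] [Fintype k] {S : Matrix n n R} (hS : Sᵀ = S)
    (hdet : IsUnit S.det) (β : Matrix n k R) (M : Matrix k k R) (v : n → R) :
    S⁻¹ *ᵥ ((β * M * βᵀ * S)ᵀ *ᵥ v) ∈ Submodule.span R (Set.range βᵀ) := by
  have hfactor : S⁻¹ * (β * M * βᵀ * S)ᵀ = β * (Mᵀ * βᵀ) := by
    rw [transpose_mul, transpose_mul, transpose_mul, transpose_transpose, hS,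
      ← Matrix.mul_assoc, nonsing_inv_mul S hdet, Matrix.one_mul]
  rw [mulVec_mulVec, hfactor, ← mulVec_mulVec]
  exact (range_mulVecLin β).le (LinearMap.mem_range_self β.mulVecLin _)

section CondExp

variable {Ω : Type*} {m mΩ : MeasurableSpace Ω} {μ : Measure Ω}

theorem integral_mul_eq_integral_condExp_mul (hm : m ≤ mΩ) [SigmaFinite (μ.trim hm)]
    {f g : Ω → ℝ} (hg : StronglyMeasurable[m] g) (hfg : Integrable (f * g) μ)
    (hf : Integrable f μ) :
    ∫ ω, f ω * g ω ∂μ = ∫ ω, (μ[f | m]) ω * g ω ∂μ := by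
  rw [← integral_condExp hm]
  exact integral_congr_ae (condExp_mul_of_stronglyMeasurable_right hg hfg hf)

theorem setIntegral_eq_integral_condExp_indicator_mul [IsFiniteMeasure μ] (hm : m ≤ mΩ)
    {s : Set Ω} (hs : MeasurableSet s) {g : Ω → ℝ} (hg : StronglyMeasurable[m] g)
    (hgi : Integrable g μ) :
    ∫ ω in s, g ω ∂μ = ∫ ω, (μ⟦s | m⟧) ω * g ω ∂μ := by
  have hindicator : s.indicator (fun _ => (1 : ℝ)) * g = s.indicator g := by
    ext ω; by_cases h : ω ∈ s <;> simp [h]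
  rw [← integral_indicator hs, ← hindicator]
  exact integral_mul_eq_integral_condExp_mul hm hg (hindicator ▸ hgi.indicator hs)
    ((integrable_const 1).indicator hs)

theorem MeasureTheory.Integrable.mul_condExp_indicator {f : Ω → ℝ} (hf : Integrable f μ)
    (s : Set Ω) : Integrable (f * μ⟦s | m⟧) μ := by
  have hbdd : ∀ ω, |s.indicator (fun _ => (1 : ℝ)) ω| ≤ 1 := fun ω => by
    by_cases h : ω ∈ s <;> simp [h]
  refine hf.mul_bdd integrable_condExp.aestronglyMeasurable (c := 1) ?_
  simpa [Real.norm_eq_abs] using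
    ae_bdd_abs_condExp_of_ae_bdd_abs (m := m) (ae_of_all μ hbdd)

end CondExp

section CondIndep

variable {Ω β γ : Type*} {m mΩ : MeasurableSpace Ω} [StandardBorelSpace Ω] {μ : Measure Ω}
  [IsFiniteMeasure μ] [MeasurableSpace β] [mγ : MeasurableSpace γ] {Y : Ω → β} {X : Ω → γ}
  {A : Set β}

theorem setIntegral_preimage_condExp_indicator_eq_measureReal (hm : m ≤ mΩ)
    (hY : Measurable Y) (hX : Measurable X) (hCI : CondIndepFun m hm Y X μ)
    (hA : MeasurableSet A) {t : Set γ} (ht : MeasurableSet t) :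
    ∫ ω in X ⁻¹' t, (μ⟦Y ⁻¹' A | m⟧) ω ∂μ = μ.real (Y ⁻¹' A ∩ X ⁻¹' t) := by
  have hprod := (condIndepFun_iff_condExp_inter_preimage_eq_mul hY hX).1 hCI A t hA ht
  calc ∫ ω in X ⁻¹' t, (μ⟦Y ⁻¹' A | m⟧) ω ∂μ
      = ∫ ω, (μ⟦X ⁻¹' t | m⟧) ω * (μ⟦Y ⁻¹' A | m⟧) ω ∂μ :=
        setIntegral_eq_integral_condExp_indicator_mul hm (hX ht) stronglyMeasurable_condExp
          integrable_condExp
    _ = ∫ ω, (μ⟦Y ⁻¹' A ∩ X ⁻¹' t | m⟧) ω ∂μ := by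
        refine integral_congr_ae ?_
        filter_upwards [hprod] with ω hω
        rw [hω, mul_comm]
    _ = μ.real (Y ⁻¹' A ∩ X ⁻¹' t) := by
        rw [integral_condExp hm]
        exact integral_indicator_one ((hY hA).inter (hX ht))

theorem condExp_indicator_preimage_ae_eq_of_condIndepFun (hm : m ≤ mΩ)
    (hmX : m ≤ mγ.comap X) (hY : Measurable Y) (hX : Measurable X)
    (hCI : CondIndepFun m hm Y X μ) (hA : MeasurableSet A) :
    μ⟦Y ⁻¹' A | m⟧ =ᵐ[μ] μ⟦Y ⁻¹' A | mγ.comap X⟧ := by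
  refine ae_eq_condExp_of_forall_setIntegral_eq hX.comap_le
    ((integrable_const 1).indicator (hY hA)) (fun _ _ _ => integrable_condExp.integrableOn) ?_
    (stronglyMeasurable_condExp.mono hmX).aestronglyMeasurable
  rintro _ ⟨t, ht, rfl⟩ -
  rw [setIntegral_preimage_condExp_indicator_eq_measureReal hm hY hX hCI hA ht,
    ← measureReal_restrict_apply (hY hA)]
  exact (integral_indicator_one (hY hA)).symm

theorem setIntegral_preimage_eq_integral_mul_condExp_indicator (hm : m ≤ mΩ)
    (hmX : m ≤ mγ.comap X) (hY : Measurable Y) (hX : Measurable X)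
    (hCI : CondIndepFun m hm Y X μ) (hA : MeasurableSet A) {f : Ω → ℝ}
    (hfm : StronglyMeasurable[mγ.comap X] f) (hf : Integrable f μ) :
    ∫ ω in Y ⁻¹' A, f ω ∂μ = ∫ ω, f ω * (μ⟦Y ⁻¹' A | m⟧) ω ∂μ := by
  rw [setIntegral_eq_integral_condExp_indicator_mul hX.comap_le (hY hA) hfm hf]
  refine integral_congr_ae ?_
  filter_upwards [condExp_indicator_preimage_ae_eq_of_condIndepFun hm hmX hY hX hCI hA]
    with ω hω
  rw [hω, mul_comm]

end CondIndep

section LinearConditionalMean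

variable {Ω β ι : Type*} [Fintype ι] {m mΩ : MeasurableSpace Ω} [StandardBorelSpace Ω]
  {μ : Measure Ω} [IsFiniteMeasure μ] [MeasurableSpace β] {Y : Ω → β} {X : Ω → ι → ℝ}
  {A : Set β}

theorem setIntegral_preimage_eq_mulVec_of_condExp_ae_eq_mulVec (hm : m ≤ mΩ)
    (hmX : m ≤ MeasurableSpace.comap X inferInstance) (hY : Measurable Y) (hX : Measurable X)
    (hXint : Integrable X μ) (hCI : CondIndepFun m hm Y X μ) {Q : Matrix ι ι ℝ}
    (hLCM : ∀ j, μ[(X · j) | m] =ᵐ[μ] fun ω => (Q *ᵥ X ω) j) (hA : MeasurableSet A) :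
    ∫ ω in Y ⁻¹' A, X ω ∂μ = Q *ᵥ ∫ ω in Y ⁻¹' A, X ω ∂μ := by
  let L : (ι → ℝ) →L[ℝ] ι → ℝ := LinearMap.toContinuousLinearMap Q.mulVecLin
  have hcomp : ∀ g : (ι → ℝ) → ℝ, Measurable g →
      StronglyMeasurable[MeasurableSpace.comap X inferInstance] (fun ω => g (X ω)) :=
    fun g hg => (hg.comp (comap_measurable X)).stronglyMeasurable
  have hQXint : Integrable (fun ω => Q *ᵥ X ω) μ := L.integrable_comp hXint
  calc ∫ ω in Y ⁻¹' A, X ω ∂μ = ∫ ω in Y ⁻¹' A, Q *ᵥ X ω ∂μ := by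
        ext j
        have hXj := hXint.eval j
        rw [eval_integral hXint.integrableOn.eval, eval_integral hQXint.integrableOn.eval,
          setIntegral_preimage_eq_integral_mul_condExp_indicator hm hmX hY hX hCI hA
            (hcomp (· j) (measurable_pi_apply j)) hXj,
          setIntegral_preimage_eq_integral_mul_condExp_indicator hm hmX hY hX hCI hA
            (hcomp (fun v => (Q *ᵥ v) j) ((measurable_pi_apply j).comp L.measurable))
            (hQXint.eval j),
          integral_mul_eq_integral_condExp_mul hm stronglyMeasurable_condExp
            (hXj.mul_condExp_indicator _) hXj]
        refine integral_congr_ae ?_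
        filter_upwards [hLCM j] with ω hω
        rw [hω]
    _ = Q *ᵥ ∫ ω in Y ⁻¹' A, X ω ∂μ := L.integral_comp_comm hXint.integrableOn

end LinearConditionalMean

theorem sir_unbiasedness_general
    {Ω : Type} [MeasurableSpace Ω] [StandardBorelSpace Ω]
    (μ : Measure Ω) [IsProbabilityMeasure μ]
    {p d : ℕ} {𝒴 : Type} [MeasurableSpace 𝒴]
    (X : Ω → Fin p → ℝ) (hXmeas : Measurable X) (hXint : Integrable X μ)
    (Y : Ω → 𝒴) (hYmeas : Measurable Y)
    (S : Matrix (Fin p) (Fin p) ℝ)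
    (hScov : ∀ i j, S i j = ∫ ω, X ω i * X ω j ∂μ) (hS : IsUnit S.det)
    (β : Matrix (Fin p) (Fin d) ℝ)
    (hle : MeasurableSpace.comap (fun ω => βᵀ.mulVec (X ω)) inferInstance ≤
      (inferInstance : MeasurableSpace Ω))
    (hLCM : ∀ j : Fin p,
      μ[(fun ω => X ω j) |
          MeasurableSpace.comap (fun ω => βᵀ.mulVec (X ω)) inferInstance] =ᵐ[μ]
        fun ω => (β * (βᵀ * S * β)⁻¹ * βᵀ * S)ᵀ.mulVec (X ω) j)
    (hCI : CondIndepFun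
      (MeasurableSpace.comap (fun ω => βᵀ.mulVec (X ω)) inferInstance) hle Y X μ) :
    ∀ A : Set 𝒴, MeasurableSet A →
      S⁻¹.mulVec (∫ ω, Set.indicator A (fun _ => (1 : ℝ)) (Y ω) • X ω ∂μ) ∈
        Submodule.span ℝ (Set.range βᵀ) := by
  intro A hA
  have hmX : MeasurableSpace.comap (fun ω => βᵀ *ᵥ X ω) inferInstance ≤
      MeasurableSpace.comap X inferInstance :=
    ((Matrix.mulVecLin βᵀ).continuous_of_finiteDimensional.measurable.comp
      (comap_measurable X)).comap_le
  have hSsymm : Sᵀ = S := by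
    ext i j
    simp only [transpose_apply, hScov, mul_comm]
  have hslice :
      ∫ ω, A.indicator (fun _ => (1 : ℝ)) (Y ω) • X ω ∂μ = ∫ ω in Y ⁻¹' A, X ω ∂μ := by
    rw [← integral_indicator (hYmeas hA)]
    congr with ω
    by_cases h : Y ω ∈ A <;> simp [h]
  rw [hslice, setIntegral_preimage_eq_mulVec_of_condExp_ae_eq_mulVec hle hmX hYmeas hXmeas
    hXint hCI hLCM hA]
  exact inv_mulVec_transpose_mulVec_mem_span_col hSsymm hS β _ _

/-- Unbiasedness of sliced inverse regression under the linear conditional mean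
condition: if `E(X | βᵀX) = P_β(Σ)ᵀ X` a.s. (with `P_β(Σ) = β(βᵀΣβ)⁻¹βᵀΣ`) and `Y` is
conditionally independent of `X` given `βᵀX`, then for every event `A` of `Y`,
`Σ⁻¹ E[X·1_A(Y)]` lies in the column space of `β`. -/
theorem sir_unbiasedness
    {Ω : Type} [MeasurableSpace Ω] [StandardBorelSpace Ω]
    (μ : Measure Ω) [IsProbabilityMeasure μ]
    {p d : ℕ} {𝒴 : Type} [MeasurableSpace 𝒴]
    (X : Ω → Fin p → ℝ) (hXmeas : Measurable X) (hXint : Integrable X μ)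
    (hX2 : ∀ i j : Fin p, Integrable (fun ω => X ω i * X ω j) μ)
    (hEX : (∫ ω, X ω ∂μ) = 0)
    (Y : Ω → 𝒴) (hYmeas : Measurable Y)
    (S : Matrix (Fin p) (Fin p) ℝ)
    (hScov : ∀ i j, S i j = ∫ ω, X ω i * X ω j ∂μ) (hS : IsUnit S.det)
    (β : Matrix (Fin p) (Fin d) ℝ) (hβrank : LinearIndependent ℝ βᵀ) (hdp : d < p)
    (hle : MeasurableSpace.comap (fun ω => βᵀ.mulVec (X ω)) inferInstance ≤
      (inferInstance : MeasurableSpace Ω))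
    (hLCM : ∀ j : Fin p,
      μ[(fun ω => X ω j) |
          MeasurableSpace.comap (fun ω => βᵀ.mulVec (X ω)) inferInstance] =ᵐ[μ]
        fun ω => (β * (βᵀ * S * β)⁻¹ * βᵀ * S)ᵀ.mulVec (X ω) j)
    (hCI : CondIndepFun
      (MeasurableSpace.comap (fun ω => βᵀ.mulVec (X ω)) inferInstance) hle Y X μ) :
    ∀ A : Set 𝒴, MeasurableSet A →
      S⁻¹.mulVec (∫ ω, Set.indicator A (fun _ => (1 : ℝ)) (Y ω) • X ω ∂μ) ∈
        Submodule.span ℝ (Set.range βᵀ) :=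
  sir_unbiasedness_general μ X hXmeas hXint Y hYmeas S hScov hS β hle hLCM hCI
end
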